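/- arXiv:math/0301152 — 4 statements merged into one kernel-verified Lean document; each statement's English description precedes it below -/
import Mathlib

section
/- Stability of sampling for cosine polynomials: let 0 = x_1 < x_2 < ... < x_r = 1, set x_0 = −x_1, x_{r+1} = 2 − x_r, weights w_j = (x_{j+1} − x_{j−1})/2, and δ = max_j (x_{j+1} − x_j). If δ < 1/M, then for every cosine polynomial p of degree at most M, (1−δM)² ‖p‖₂² ≤ Σ_{j=1}^r |p(x_j)|² w_j ≤ (1+δM)² ‖p‖₂², where ‖p‖₂² = ∫_0^1 |p(x)|² dx. -/
/-!
Cut `[0, 1]` at the midpoints `(x_j + x_{j+1}) / 2`: the cell around `x_j` has length `w_j` and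
reaches at most `δ / 2` to either side of `x_j`. On that cell `p - p(x_j)` vanishes at `x_j`, so
Wirtinger's inequality gives `∫ (p - p(x_j))² ≤ (δ / π)² ∫ p'²` there. Summed over the cells and
combined with Bernstein's inequality `‖p'‖₂ ≤ π M ‖p‖₂` (Parseval), the total deviation is at
most `(δ M)² ‖p‖₂²`. Finally `Σ_j p(x_j)² w_j` is the integral of `p(x_j)²` over the cells, and
the pointwise bounds `(1 - d) u² + (1 - 1/d) v² ≤ (u - v)² ≤ (1 + d) u² + (1 + 1/d) v²` with
`u = p`, `v = p - p(x_j)`, `d = δ M` give both inequalities.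
-/

open Real MeasureTheory

open Set Filter Topology

section Wirtinger

variable {f f' φ : ℝ → ℝ} {a b c : ℝ}

/-- Picone's identity: for a solution `φ` of the Riccati equation `φ' = -(c² + φ²)`,
`f'² - c² f² = (f' - φ f)² + (φ f²)'`. -/
theorem sub_le_integral_deriv_sq_sub_sq_of_riccati (hab : a ≤ b) (hf : ∀ t, HasDerivAt f (f' t) t)
    (hf' : Continuous f') (hφ : ∀ t ∈ Icc a b, HasDerivAt φ (-(c ^ 2 + φ t ^ 2)) t) :
    φ b * f b ^ 2 - φ a * f a ^ 2 ≤ ∫ t in a..b, (f' t ^ 2 - c ^ 2 * f t ^ 2) := by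
  have hfc : Continuous f := Differentiable.continuous fun t => (hf t).differentiableAt
  have hφc : ContinuousOn φ (uIcc a b) := by
    rw [uIcc_of_le hab]
    exact fun t ht => (hφ t ht).continuousAt.continuousWithinAt
  set G' : ℝ → ℝ := fun t => -(c ^ 2 + φ t ^ 2) * f t ^ 2 + φ t * (2 * f t * f' t)
  have hG : ∀ t ∈ uIcc a b, HasDerivAt (fun t => φ t * f t ^ 2) (G' t) t := by
    intro t ht
    rw [uIcc_of_le hab] at ht
    exact ((hφ t ht).mul ((hf t).pow 2)).congr_deriv (by simp only [G', Pi.pow_apply]; ring)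
  have hG'int : IntervalIntegrable G' volume a b := by
    refine ContinuousOn.intervalIntegrable ?_
    simp only [G']
    fun_prop
  have hsq_int : IntervalIntegrable (fun t => (f' t - φ t * f t) ^ 2) volume a b := by
    refine ContinuousOn.intervalIntegrable ?_
    fun_prop
  have hsplit : ∫ t in a..b, (f' t ^ 2 - c ^ 2 * f t ^ 2) =
      (∫ t in a..b, (f' t - φ t * f t) ^ 2) + ∫ t in a..b, G' t := by
    rw [← intervalIntegral.integral_add hsq_int hG'int]
    congr 1
    ext t
    simp only [G']
    ring
  rw [hsplit, intervalIntegral.integral_eq_sub_of_hasDerivAt hG hG'int]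
  exact le_add_of_nonneg_left (intervalIntegral.integral_nonneg hab fun t _ => sq_nonneg _)

theorem hasDerivAt_mul_tan_mul_sub (c s t : ℝ) (ht : cos (c * (s - t)) ≠ 0) :
    HasDerivAt (fun t => c * tan (c * (s - t))) (-(c ^ 2 + (c * tan (c * (s - t))) ^ 2)) t := by
  have h := ((hasDerivAt_tan ht).comp t (((hasDerivAt_id t).const_sub s).const_mul c)).const_mul c
  refine h.congr_deriv ?_
  rw [← inv_one_add_tan_sq ht]
  field_simp

theorem sq_mul_integral_sq_le_integral_deriv_sq (hab : a ≤ b) (hf : ∀ t, HasDerivAt f (f' t) t)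
    (hf' : Continuous f') (hc : 0 ≤ c) (hcab : c * (b - a) < π / 2) (hzero : f a = 0 ∨ f b = 0) :
    c ^ 2 * ∫ t in a..b, f t ^ 2 ≤ ∫ t in a..b, f' t ^ 2 := by
  have hfc : Continuous f := Differentiable.continuous fun t => (hf t).differentiableAt
  have hcos : ∀ s, s = a ∨ s = b → ∀ t ∈ Icc a b, cos (c * (s - t)) ≠ 0 := by
    rintro s hs t ⟨hat, htb⟩
    refine (cos_pos_of_mem_Ioo ⟨?_, ?_⟩).ne' <;> rcases hs with rfl | rfl <;> nlinarith
  have hpicone : ∀ s, s = a ∨ s = b →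
      c * tan (c * (s - b)) * f b ^ 2 - c * tan (c * (s - a)) * f a ^ 2 ≤
        ∫ t in a..b, (f' t ^ 2 - c ^ 2 * f t ^ 2) := fun s hs =>
    sub_le_integral_deriv_sq_sub_sq_of_riccati hab hf hf' fun t ht =>
      hasDerivAt_mul_tan_mul_sub c s t (hcos s hs t ht)
  have hnonneg : 0 ≤ ∫ t in a..b, (f' t ^ 2 - c ^ 2 * f t ^ 2) := by
    rcases hzero with h | h
    · simpa [h] using hpicone b (Or.inr rfl)
    · simpa [h] using hpicone a (Or.inl rfl)
  rw [intervalIntegral.integral_sub (Continuous.intervalIntegrable (by fun_prop) _ _)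
    (Continuous.intervalIntegrable (by fun_prop) _ _),
    intervalIntegral.integral_const_mul] at hnonneg
  linarith

/-- Wirtinger's inequality. -/
theorem integral_sq_le_of_eq_zero_or (hab : a ≤ b) (hf : ∀ t, HasDerivAt f (f' t) t)
    (hf' : Continuous f') (hzero : f a = 0 ∨ f b = 0) :
    ∫ t in a..b, f t ^ 2 ≤ (2 * (b - a) / π) ^ 2 * ∫ t in a..b, f' t ^ 2 := by
  rcases hab.eq_or_lt with rfl | hlt
  · simp
  have hba : 0 < b - a := sub_pos.2 hlt
  set c₀ := π / (2 * (b - a))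
  have hc₀ : 0 < c₀ := by positivity
  -- At `c = c₀` the Riccati solution `c tan (c (s - t))` blows up at an endpoint: take a limit.
  have hlim : c₀ ^ 2 * ∫ t in a..b, f t ^ 2 ≤ ∫ t in a..b, f' t ^ 2 := by
    have hcont : Tendsto (fun c : ℝ => c ^ 2 * ∫ t in a..b, f t ^ 2) (𝓝[<] c₀)
        (𝓝 (c₀ ^ 2 * ∫ t in a..b, f t ^ 2)) :=
      (Continuous.tendsto (by fun_prop) c₀).mono_left nhdsWithin_le_nhds
    refine le_of_tendsto hcont ?_
    filter_upwards [Ico_mem_nhdsLT hc₀] with c ⟨hc, hcc₀⟩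
    refine sq_mul_integral_sq_le_integral_deriv_sq hab hf hf' hc ?_ hzero
    calc c * (b - a) < c₀ * (b - a) := by gcongr
      _ = π / 2 := by simp only [c₀]; field_simp
  have hinv : (2 * (b - a) / π) ^ 2 * c₀ ^ 2 = 1 := by
    simp only [c₀]
    field_simp
  calc ∫ t in a..b, f t ^ 2 = (2 * (b - a) / π) ^ 2 * (c₀ ^ 2 * ∫ t in a..b, f t ^ 2) := by
        rw [← mul_assoc, hinv, one_mul]
    _ ≤ (2 * (b - a) / π) ^ 2 * ∫ t in a..b, f' t ^ 2 := by gcongr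

theorem integral_sq_sub_le_of_mem_Icc {z h : ℝ} (hf : ∀ t, HasDerivAt f (f' t) t)
    (hf' : Continuous f') (hz : z ∈ Icc a b) (hza : z - a ≤ h) (hbz : b - z ≤ h) :
    ∫ t in a..b, (f t - f z) ^ 2 ≤ (2 * h / π) ^ 2 * ∫ t in a..b, f' t ^ 2 := by
  have hfc : Continuous f := Differentiable.continuous fun t => (hf t).differentiableAt
  have hg : ∀ t, HasDerivAt (fun t => f t - f z) (f' t) t := fun t => (hf t).sub_const _
  have half : ∀ {u v : ℝ}, u ≤ v → v - u ≤ h → f u = f z ∨ f v = f z →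
      ∫ t in u..v, (f t - f z) ^ 2 ≤ (2 * h / π) ^ 2 * ∫ t in u..v, f' t ^ 2 := by
    intro u v huv hvu hzero
    refine (integral_sq_le_of_eq_zero_or huv hg hf' (by simpa [sub_eq_zero] using hzero)).trans ?_
    gcongr
    exact intervalIntegral.integral_nonneg huv fun t _ => sq_nonneg _
  rw [← intervalIntegral.integral_add_adjacent_intervals (b := z)
    (f := fun t => (f t - f z) ^ 2) (Continuous.intervalIntegrable (by fun_prop) _ _)
    (Continuous.intervalIntegrable (by fun_prop) _ _),
    ← intervalIntegral.integral_add_adjacent_intervals (b := z) (f := fun t => f' t ^ 2)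
    (Continuous.intervalIntegrable (by fun_prop) _ _)
    (Continuous.intervalIntegrable (by fun_prop) _ _), mul_add]
  exact add_le_add (half hz.1 hza (Or.inr rfl)) (half hz.2 hbz (Or.inl rfl))

end Wirtinger

theorem integral_cos_pi_int_mul (m : ℤ) :
    ∫ t in (0 : ℝ)..1, cos (π * m * t) = if m = 0 then 1 else 0 := by
  split_ifs with hm
  · simp [hm]
  · have hπm : π * m ≠ 0 := mul_ne_zero pi_ne_zero (Int.cast_ne_zero.2 hm)
    rw [intervalIntegral.integral_comp_mul_left (fun t => cos t) hπm]
    simp [mul_comm π, sin_int_mul_pi]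

theorem integral_cos_mul_cos (k l : ℕ) (hkl : k + l ≠ 0) :
    ∫ t in (0 : ℝ)..1, cos (π * k * t) * cos (π * l * t) = if k = l then 1 / 2 else 0 := by
  have h : ∀ t : ℝ, cos (π * k * t) * cos (π * l * t) =
      (cos (π * ((k - l : ℤ) : ℝ) * t) + cos (π * ((k + l : ℤ) : ℝ) * t)) / 2 := by
    intro t
    push_cast
    rw [show π * (k - l) * t = π * k * t - π * l * t by ring,
      show π * (k + l) * t = π * k * t + π * l * t by ring, cos_sub, cos_add]
    ring
  simp_rw [h]
  rw [intervalIntegral.integral_div, intervalIntegral.integral_add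
    (Continuous.intervalIntegrable (by fun_prop) _ _)
    (Continuous.intervalIntegrable (by fun_prop) _ _),
    integral_cos_pi_int_mul, integral_cos_pi_int_mul]
  have hkl' : (k + l : ℤ) ≠ 0 := by omega
  have hsub : (k - l : ℤ) = 0 ↔ k = l := by omega
  simp only [hkl', hsub, if_false, add_zero]
  split_ifs <;> norm_num

theorem integral_sin_mul_sin (k l : ℕ) (hkl : k + l ≠ 0) :
    ∫ t in (0 : ℝ)..1, sin (π * k * t) * sin (π * l * t) = if k = l then 1 / 2 else 0 := by
  have h : ∀ t : ℝ, sin (π * k * t) * sin (π * l * t) =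
      cos (π * k * t) * cos (π * l * t) - cos (π * ((k + l : ℤ) : ℝ) * t) := by
    intro t
    push_cast
    rw [show π * (k + l) * t = π * k * t + π * l * t by ring, cos_add]
    ring
  simp_rw [h]
  rw [intervalIntegral.integral_sub (Continuous.intervalIntegrable (by fun_prop) _ _)
    (Continuous.intervalIntegrable (by fun_prop) _ _), integral_cos_mul_cos k l hkl,
    integral_cos_pi_int_mul, if_neg (show (k + l : ℤ) ≠ 0 by omega), sub_zero]

theorem integral_sum_sq_of_orthogonal {ι : Type*} [DecidableEq ι] {a b N : ℝ} (s : Finset ι)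
    (e : ι → ℝ → ℝ) (he : ∀ k, Continuous (e k))
    (horth : ∀ k ∈ s, ∀ l ∈ s, ∫ t in a..b, e k t * e l t = if k = l then N else 0)
    (α : ι → ℝ) :
    ∫ t in a..b, (∑ k ∈ s, α k * e k t) ^ 2 = N * ∑ k ∈ s, α k ^ 2 := by
  have hexpand : ∀ t, (∑ k ∈ s, α k * e k t) ^ 2 =
      ∑ k ∈ s, ∑ l ∈ s, α k * α l * (e k t * e l t) := by
    intro t
    rw [sq, Finset.sum_mul_sum]
    exact Finset.sum_congr rfl fun k _ => Finset.sum_congr rfl fun l _ => by ring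
  simp_rw [hexpand]
  rw [intervalIntegral.integral_finsetSum fun k _ =>
    Continuous.intervalIntegrable (continuous_finsetSum _ fun l _ => by fun_prop) _ _,
    Finset.mul_sum]
  refine Finset.sum_congr rfl fun k hk => ?_
  rw [intervalIntegral.integral_finsetSum fun l _ =>
    Continuous.intervalIntegrable (by fun_prop) _ _]
  simp_rw [intervalIntegral.integral_const_mul]
  rw [Finset.sum_congr rfl fun l hl => by rw [horth k hk l hl]]
  simp only [mul_ite, mul_zero, Finset.sum_ite_eq, if_pos hk]
  ring

noncomputable def cosPoly (M : ℕ) (c : ℕ → ℝ) (t : ℝ) : ℝ :=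
  c 0 / √2 + ∑ k ∈ Finset.Icc 1 M, c k * cos (π * k * t)

noncomputable def cosPolyDeriv (M : ℕ) (c : ℕ → ℝ) (t : ℝ) : ℝ :=
  ∑ k ∈ Finset.Icc 1 M, -(π * k * c k) * sin (π * k * t)

theorem hasDerivAt_cosPoly (M : ℕ) (c : ℕ → ℝ) (t : ℝ) :
    HasDerivAt (cosPoly M c) (cosPolyDeriv M c t) t := by
  refine HasDerivAt.const_add _ (HasDerivAt.fun_sum fun k _ => ?_)
  exact ((((hasDerivAt_id' t).const_mul (π * k)).cos).const_mul (c k)).congr_deriv (by ring)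

theorem continuous_cosPolyDeriv (M : ℕ) (c : ℕ → ℝ) : Continuous (cosPolyDeriv M c) := by
  unfold cosPolyDeriv
  fun_prop

theorem integral_cosPoly_sq (M : ℕ) (c : ℕ → ℝ) :
    ∫ t in (0 : ℝ)..1, cosPoly M c t ^ 2 = c 0 ^ 2 / 2 + 1 / 2 * ∑ k ∈ Finset.Icc 1 M, c k ^ 2 := by
  set R : ℝ → ℝ := fun t => ∑ k ∈ Finset.Icc 1 M, c k * cos (π * k * t)
  have hRc : Continuous R := by fun_prop
  have hR : ∫ t in (0 : ℝ)..1, R t = 0 := by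
    rw [intervalIntegral.integral_finsetSum fun k _ =>
      Continuous.intervalIntegrable (by fun_prop) _ _]
    refine Finset.sum_eq_zero fun k hk => ?_
    have hk : k ≠ 0 := by have := (Finset.mem_Icc.1 hk).1; omega
    simpa [hk] using Or.inr (integral_cos_pi_int_mul k)
  have hR2 : ∫ t in (0 : ℝ)..1, R t ^ 2 = 1 / 2 * ∑ k ∈ Finset.Icc 1 M, c k ^ 2 :=
    integral_sum_sq_of_orthogonal _ (fun (k : ℕ) t => cos (π * k * t)) (fun k => by fun_prop)
      (fun k hk l _ => integral_cos_mul_cos k l (by have := (Finset.mem_Icc.1 hk).1; omega)) c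
  have hexpand : ∀ t, cosPoly M c t ^ 2 = c 0 ^ 2 / 2 + (2 * (c 0 / √2) * R t + R t ^ 2) := by
    intro t
    rw [cosPoly, add_sq, div_pow, sq_sqrt zero_le_two]
    ring
  simp_rw [hexpand]
  rw [intervalIntegral.integral_add intervalIntegrable_const
    (Continuous.intervalIntegrable (by fun_prop) _ _), intervalIntegral.integral_add
    (Continuous.intervalIntegrable (by fun_prop) _ _)
    (Continuous.intervalIntegrable (by fun_prop) _ _), intervalIntegral.integral_const_mul, hR,
    hR2]
  simp

theorem integral_cosPolyDeriv_sq (M : ℕ) (c : ℕ → ℝ) :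
    ∫ t in (0 : ℝ)..1, cosPolyDeriv M c t ^ 2 =
      1 / 2 * ∑ k ∈ Finset.Icc 1 M, (π * k * c k) ^ 2 := by
  simp_rw [← neg_sq (π * _ * c _)]
  exact integral_sum_sq_of_orthogonal _ (fun (k : ℕ) t => sin (π * k * t)) (fun k => by fun_prop)
    (fun k hk l _ => integral_sin_mul_sin k l (by have := (Finset.mem_Icc.1 hk).1; omega)) _

/-- Bernstein's inequality in `L²(0, 1)`. -/
theorem integral_cosPolyDeriv_sq_le (M : ℕ) (c : ℕ → ℝ) :
    ∫ t in (0 : ℝ)..1, cosPolyDeriv M c t ^ 2 ≤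
      (π * M) ^ 2 * ∫ t in (0 : ℝ)..1, cosPoly M c t ^ 2 := by
  rw [integral_cosPolyDeriv_sq, integral_cosPoly_sq, mul_add, Finset.mul_sum, Finset.mul_sum,
    Finset.mul_sum]
  refine le_add_of_nonneg_of_le (by positivity) (Finset.sum_le_sum fun k hk => ?_)
  have hkM : (k : ℝ) ≤ M := by exact_mod_cast (Finset.mem_Icc.1 hk).2
  have : (π * k * c k) ^ 2 ≤ (π * M) ^ 2 * c k ^ 2 := by
    rw [mul_pow, mul_pow, mul_pow]
    gcongr
  linarith

section Sampling

theorem sq_sub_le_add_sq (u v : ℝ) {d : ℝ} (hd : 0 < d) :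
    (u - v) ^ 2 ≤ (1 + d) * u ^ 2 + (1 + d⁻¹) * v ^ 2 := by
  have : 0 ≤ (d * u + v) ^ 2 / d := by positivity
  have h : (1 + d) * u ^ 2 + (1 + d⁻¹) * v ^ 2 - (u - v) ^ 2 = (d * u + v) ^ 2 / d := by
    field_simp
    ring
  linarith

theorem add_sq_le_sq_sub (u v : ℝ) {d : ℝ} (hd : 0 < d) :
    (1 - d) * u ^ 2 + (1 - d⁻¹) * v ^ 2 ≤ (u - v) ^ 2 := by
  have : 0 ≤ (d * u - v) ^ 2 / d := by positivity
  have h : (u - v) ^ 2 - ((1 - d) * u ^ 2 + (1 - d⁻¹) * v ^ 2) = (d * u - v) ^ 2 / d := by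
    field_simp
    ring
  linarith

variable {P Q : ℝ → ℝ} {a b d : ℝ}

theorem length_mul_sq_le (hP : Continuous P) (hab : a ≤ b) (e : ℝ) (hd : 0 < d) :
    (b - a) * e ^ 2 ≤
      (1 + d) * (∫ t in a..b, P t ^ 2) + (1 + d⁻¹) * ∫ t in a..b, (P t - e) ^ 2 := by
  rw [← intervalIntegral.integral_const_mul, ← intervalIntegral.integral_const_mul,
    ← intervalIntegral.integral_add (Continuous.intervalIntegrable (by fun_prop) _ _)
    (Continuous.intervalIntegrable (by fun_prop) _ _), ← smul_eq_mul,
    ← intervalIntegral.integral_const]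
  refine intervalIntegral.integral_mono_on hab intervalIntegrable_const
    (Continuous.intervalIntegrable (by fun_prop) _ _) fun t _ => ?_
  simpa using sq_sub_le_add_sq (P t) (P t - e) hd

theorem le_length_mul_sq (hP : Continuous P) (hab : a ≤ b) (e : ℝ) (hd : 0 < d) :
    (1 - d) * (∫ t in a..b, P t ^ 2) + (1 - d⁻¹) * ∫ t in a..b, (P t - e) ^ 2 ≤
      (b - a) * e ^ 2 := by
  rw [← intervalIntegral.integral_const_mul, ← intervalIntegral.integral_const_mul,
    ← intervalIntegral.integral_add (Continuous.intervalIntegrable (by fun_prop) _ _)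
    (Continuous.intervalIntegrable (by fun_prop) _ _), ← smul_eq_mul,
    ← intervalIntegral.integral_const]
  refine intervalIntegral.integral_mono_on hab
    (Continuous.intervalIntegrable (by fun_prop) _ _) intervalIntegrable_const fun t _ => ?_
  simpa using add_sq_le_sq_sub (P t) (P t - e) hd

variable {r : ℕ} {y z : ℕ → ℝ} {h : ℝ}

theorem sum_integral_sq_sub_le (hP : ∀ t, HasDerivAt P (Q t) t) (hQ : Continuous Q)
    (hz : ∀ k < r, z k ∈ Icc (y k) (y (k + 1)))
    (hh : ∀ k < r, z k - y k ≤ h ∧ y (k + 1) - z k ≤ h) :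
    ∑ k ∈ Finset.range r, ∫ t in y k..y (k + 1), (P t - P (z k)) ^ 2 ≤
      (2 * h / π) ^ 2 * ∫ t in y 0..y r, Q t ^ 2 := by
  rw [← intervalIntegral.sum_integral_adjacent_intervals fun k _ =>
    Continuous.intervalIntegrable (by fun_prop) _ _, Finset.mul_sum]
  refine Finset.sum_le_sum fun k hk => ?_
  have hk := Finset.mem_range.1 hk
  exact integral_sq_sub_le_of_mem_Icc hP hQ (hz k hk) (hh k hk).1 (hh k hk).2

theorem sum_sq_mul_le (hP : ∀ t, HasDerivAt P (Q t) t) (hQ : Continuous Q)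
    (hz : ∀ k < r, z k ∈ Icc (y k) (y (k + 1)))
    (hh : ∀ k < r, z k - y k ≤ h ∧ y (k + 1) - z k ≤ h) (hd : 0 < d)
    (hQP : (2 * h / π) ^ 2 * ∫ t in y 0..y r, Q t ^ 2 ≤ d ^ 2 * ∫ t in y 0..y r, P t ^ 2) :
    ∑ k ∈ Finset.range r, (y (k + 1) - y k) * P (z k) ^ 2 ≤
      (1 + d) ^ 2 * ∫ t in y 0..y r, P t ^ 2 := by
  have hPc : Continuous P := Differentiable.continuous fun t => (hP t).differentiableAt
  have hdev := sum_integral_sq_sub_le hP hQ hz hh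
  calc ∑ k ∈ Finset.range r, (y (k + 1) - y k) * P (z k) ^ 2
      ≤ ∑ k ∈ Finset.range r, ((1 + d) * (∫ t in y k..y (k + 1), P t ^ 2) +
          (1 + d⁻¹) * ∫ t in y k..y (k + 1), (P t - P (z k)) ^ 2) :=
        Finset.sum_le_sum fun k hk => length_mul_sq_le hPc
          ((hz k (Finset.mem_range.1 hk)).1.trans (hz k (Finset.mem_range.1 hk)).2) _ hd
    _ = (1 + d) * (∫ t in y 0..y r, P t ^ 2) +
          (1 + d⁻¹) * ∑ k ∈ Finset.range r, ∫ t in y k..y (k + 1), (P t - P (z k)) ^ 2 := by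
        rw [Finset.sum_add_distrib, ← Finset.mul_sum, ← Finset.mul_sum,
          intervalIntegral.sum_integral_adjacent_intervals fun k _ =>
            Continuous.intervalIntegrable (by fun_prop) _ _]
    _ ≤ (1 + d) * (∫ t in y 0..y r, P t ^ 2) + (1 + d⁻¹) * (d ^ 2 * ∫ t in y 0..y r, P t ^ 2) := by
        gcongr
        exact hdev.trans hQP
    _ = (1 + d) ^ 2 * ∫ t in y 0..y r, P t ^ 2 := by
        field_simp
        ring

theorem le_sum_sq_mul (hP : ∀ t, HasDerivAt P (Q t) t) (hQ : Continuous Q)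
    (hz : ∀ k < r, z k ∈ Icc (y k) (y (k + 1)))
    (hh : ∀ k < r, z k - y k ≤ h ∧ y (k + 1) - z k ≤ h) (hd : 0 < d) (hd1 : d ≤ 1)
    (hQP : (2 * h / π) ^ 2 * ∫ t in y 0..y r, Q t ^ 2 ≤ d ^ 2 * ∫ t in y 0..y r, P t ^ 2) :
    (1 - d) ^ 2 * ∫ t in y 0..y r, P t ^ 2 ≤
      ∑ k ∈ Finset.range r, (y (k + 1) - y k) * P (z k) ^ 2 := by
  have hPc : Continuous P := Differentiable.continuous fun t => (hP t).differentiableAt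
  have hdev := sum_integral_sq_sub_le hP hQ hz hh
  have hd' : 1 - d⁻¹ ≤ 0 := by
    rw [sub_nonpos]
    exact one_le_inv₀ hd |>.2 hd1
  calc (1 - d) ^ 2 * ∫ t in y 0..y r, P t ^ 2
      = (1 - d) * (∫ t in y 0..y r, P t ^ 2) + (1 - d⁻¹) * (d ^ 2 * ∫ t in y 0..y r, P t ^ 2) := by
        field_simp
        ring
    _ ≤ (1 - d) * (∫ t in y 0..y r, P t ^ 2) +
          (1 - d⁻¹) * ∑ k ∈ Finset.range r, ∫ t in y k..y (k + 1), (P t - P (z k)) ^ 2 := by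
        exact add_le_add_right (mul_le_mul_of_nonpos_left (hdev.trans hQP) hd') _
    _ = ∑ k ∈ Finset.range r, ((1 - d) * (∫ t in y k..y (k + 1), P t ^ 2) +
          (1 - d⁻¹) * ∫ t in y k..y (k + 1), (P t - P (z k)) ^ 2) := by
        rw [Finset.sum_add_distrib, ← Finset.mul_sum, ← Finset.mul_sum,
          intervalIntegral.sum_integral_adjacent_intervals fun k _ =>
            Continuous.intervalIntegrable (by fun_prop) _ _]
    _ ≤ ∑ k ∈ Finset.range r, (y (k + 1) - y k) * P (z k) ^ 2 :=
        Finset.sum_le_sum fun k hk => le_length_mul_sq hPc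
          ((hz k (Finset.mem_range.1 hk)).1.trans (hz k (Finset.mem_range.1 hk)).2) _ hd

theorem sampling_bounds_of_nodes {r : ℕ} {x : ℕ → ℝ} {δ ν : ℝ}
    (hP : ∀ t, HasDerivAt P (Q t) t) (hQ : Continuous Q)
    (hx : ∀ k ≤ r, x k ≤ x (k + 1)) (hδ : ∀ k ≤ r, x (k + 1) - x k ≤ δ)
    (hν : ∫ t in (x 0 + x 1) / 2..(x r + x (r + 1)) / 2, Q t ^ 2 ≤
      (π * ν) ^ 2 * ∫ t in (x 0 + x 1) / 2..(x r + x (r + 1)) / 2, P t ^ 2)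
    (hd : 0 < δ * ν) (hd1 : δ * ν ≤ 1) :
    (1 - δ * ν) ^ 2 * (∫ t in (x 0 + x 1) / 2..(x r + x (r + 1)) / 2, P t ^ 2) ≤
        ∑ j ∈ Finset.Icc 1 r, P (x j) ^ 2 * ((x (j + 1) - x (j - 1)) / 2) ∧
      ∑ j ∈ Finset.Icc 1 r, P (x j) ^ 2 * ((x (j + 1) - x (j - 1)) / 2) ≤
        (1 + δ * ν) ^ 2 * ∫ t in (x 0 + x 1) / 2..(x r + x (r + 1)) / 2, P t ^ 2 := by
  set y : ℕ → ℝ := fun k => (x k + x (k + 1)) / 2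
  have hsum : ∑ j ∈ Finset.Icc 1 r, P (x j) ^ 2 * ((x (j + 1) - x (j - 1)) / 2) =
      ∑ k ∈ Finset.range r, (y (k + 1) - y k) * P (x (k + 1)) ^ 2 := by
    have hreindex : ∀ F : ℕ → ℝ, ∑ j ∈ Finset.Icc 1 r, F j = ∑ k ∈ Finset.range r, F (k + 1) :=
      fun F => by rw [Finset.range_eq_Ico, Finset.sum_Ico_add', ← Finset.Ico_add_one_right_eq_Icc]
    rw [hreindex]
    refine Finset.sum_congr rfl fun k _ => ?_
    simp only [y, Nat.add_sub_cancel]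
    ring
  have hz : ∀ k < r, x (k + 1) ∈ Icc (y k) (y (k + 1)) := fun k hk => by
    simp only [y, mem_Icc]
    constructor <;> linarith [hx k hk.le, hx (k + 1) hk]
  have hh : ∀ k < r, x (k + 1) - y k ≤ δ / 2 ∧ y (k + 1) - x (k + 1) ≤ δ / 2 := fun k hk => by
    simp only [y]
    constructor <;> linarith [hδ k hk.le, hδ (k + 1) hk]
  have hQP : (2 * (δ / 2) / π) ^ 2 * ∫ t in y 0..y r, Q t ^ 2 ≤
      (δ * ν) ^ 2 * ∫ t in y 0..y r, P t ^ 2 := by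
    calc (2 * (δ / 2) / π) ^ 2 * ∫ t in y 0..y r, Q t ^ 2
        ≤ (2 * (δ / 2) / π) ^ 2 * ((π * ν) ^ 2 * ∫ t in y 0..y r, P t ^ 2) := by gcongr
      _ = (δ * ν) ^ 2 * ∫ t in y 0..y r, P t ^ 2 := by field_simp
  rw [hsum]
  exact ⟨le_sum_sq_mul hP hQ hz hh hd hd1 hQP, sum_sq_mul_le hP hQ hz hh hd hQP⟩

end Sampling

theorem sampling_inequality_cosine_general (M r : ℕ) (x w : ℕ → ℝ) (δ : ℝ)
    (hmono : ∀ j, 1 ≤ j → j < r → x j < x (j + 1))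
    (hx1 : x 1 = 0) (hxr : x r = 1)
    (hx0 : x 0 = -x 1) (hxr1 : x (r + 1) = 2 - x r)
    (hw : ∀ j, 1 ≤ j → j ≤ r → w j = (x (j + 1) - x (j - 1)) / 2)
    (hδ : ∀ j ≤ r, x (j + 1) - x j ≤ δ)
    (hgap : δ < 1 / M)
    (c : ℕ → ℝ) (p : ℝ → ℝ)
    (hp : ∀ t : ℝ, p t = c 0 / Real.sqrt 2 +
      ∑ k ∈ Finset.Icc 1 M, c k * Real.cos (Real.pi * k * t)) :
    (1 - δ * M) ^ 2 * (∫ t in (0:ℝ)..1, (p t) ^ 2) ≤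
        ∑ j ∈ Finset.Icc 1 r, (p (x j)) ^ 2 * w j ∧
      ∑ j ∈ Finset.Icc 1 r, (p (x j)) ^ 2 * w j ≤
        (1 + δ * M) ^ 2 * ∫ t in (0:ℝ)..1, (p t) ^ 2 := by
  obtain rfl : p = cosPoly M c := funext hp
  have hx0' : x 0 = 0 := by rw [hx0, hx1, neg_zero]
  have hxr1' : x (r + 1) = 1 := by rw [hxr1, hxr]; norm_num
  have hr : 2 ≤ r := by
    by_contra h
    interval_cases r <;> linarith
  have hδpos : 0 < δ := by linarith [hmono 1 le_rfl hr, hδ 1 (by omega)]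
  have hM : (0 : ℝ) < M := by
    refine Nat.cast_pos.2 (Nat.pos_of_ne_zero fun hM => ?_)
    simp only [hM, CharP.cast_eq_zero, div_zero] at hgap
    linarith
  have hd : δ * M < 1 := (lt_div_iff₀ hM).1 hgap
  have hx : ∀ k ≤ r, x k ≤ x (k + 1) := by
    intro k hk
    rcases Nat.eq_zero_or_pos k with rfl | hk0
    · rw [hx0', hx1]
    rcases hk.eq_or_lt with rfl | hkr
    · rw [hxr, hxr1']
    exact (hmono k hk0 hkr).le
  have hends : (x 0 + x 1) / 2 = 0 ∧ (x r + x (r + 1)) / 2 = 1 := by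
    constructor <;> simp only [hx0', hx1, hxr, hxr1'] <;> norm_num
  have hweights : ∑ j ∈ Finset.Icc 1 r, cosPoly M c (x j) ^ 2 * w j =
      ∑ j ∈ Finset.Icc 1 r, cosPoly M c (x j) ^ 2 * ((x (j + 1) - x (j - 1)) / 2) :=
    Finset.sum_congr rfl fun j hj => by
      rw [hw j (Finset.mem_Icc.1 hj).1 (Finset.mem_Icc.1 hj).2]
  have hbounds := sampling_bounds_of_nodes (hasDerivAt_cosPoly M c) (continuous_cosPolyDeriv M c)
    hx hδ (by rw [hends.1, hends.2]; exact integral_cosPolyDeriv_sq_le M c) (by positivity) hd.le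
  rwa [hends.1, hends.2, ← hweights] at hbounds

/-- Stability of sampling for cosine polynomials: with weights
`w_j = (x_{j+1} − x_{j−1})/2` and maximal gap `δ < 1/M`,
`(1−δM)²‖p‖₂² ≤ Σ_j |p(x_j)|² w_j ≤ (1+δM)²‖p‖₂²` for all cosine polynomials `p`
of degree at most `M`. -/
theorem sampling_inequality_cosine (M r : ℕ) (x w : ℕ → ℝ) (δ : ℝ) (hr : 1 ≤ r)
    (hmono : ∀ j, 1 ≤ j → j < r → x j < x (j + 1))
    (hx1 : x 1 = 0) (hxr : x r = 1)
    (hx0 : x 0 = -x 1) (hxr1 : x (r + 1) = 2 - x r)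
    (hw : ∀ j, 1 ≤ j → j ≤ r → w j = (x (j + 1) - x (j - 1)) / 2)
    (hδ : ∀ j ≤ r, x (j + 1) - x j ≤ δ)
    (hgap : δ < 1 / M)
    (c : ℕ → ℝ) (p : ℝ → ℝ)
    (hp : ∀ t : ℝ, p t = c 0 / Real.sqrt 2 +
      ∑ k ∈ Finset.Icc 1 M, c k * Real.cos (Real.pi * k * t)) :
    (1 - δ * M) ^ 2 * (∫ t in (0:ℝ)..1, (p t) ^ 2) ≤
        ∑ j ∈ Finset.Icc 1 r, (p (x j)) ^ 2 * w j ∧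
      ∑ j ∈ Finset.Icc 1 r, (p (x j)) ^ 2 * w j ≤
        (1 + δ * M) ^ 2 * ∫ t in (0:ℝ)..1, (p t) ^ 2 :=
  sampling_inequality_cosine_general M r x w δ hmono hx1 hxr hx0 hxr1 hw hδ hgap c p hp
end

section
/- The DCT-I diagonalizes symmetric Toeplitz-plus-Hankel matrices of the form B = toep(a) + J toep(Ja): for any a ∈ ℝ^{n}, C_n^T B C_n is a diagonal matrix, where toep(a) is the symmetric Toeplitz matrix with first column a and J is the counter-identity (flip) matrix. -/
/-
Number the rows and columns 0, …, m (so n = m + 1) and read the indices as residues mod 2m.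
If ã is the even 2m-periodic extension of a, then B = toep(a) + J·toep(Ja) has entries
ã(p - k) + ã(p + k), and C = (2m)^(-1/2) W K with W = diag(1, 2, …, 2, 1) and K = (cos(πkl/m)).
For an even function f on ℤ/2m, the weighted sum ∑_{k=0}^m W_k f(k) is the full sum ∑_x f(x),
so both B W K and K W K turn into sums over ℤ/2m. There x ↦ cos(πlx/m) is the real part of an
additive character, hence satisfies d'Alembert's equation, which makes it an eigenvector of the
symmetric convolution by ã; and two distinct ones are orthogonal because a nontrivial
character sums to zero. Thus B W K = K Λ and K W K is diagonal, so Cᵀ B C = (2m)⁻¹ (K W K) Λ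
is diagonal.
-/

open Real Matrix Finset

theorem Fintype.sum_sub_add_add_mul_eq_of_dAlembert {G R : Type*} [AddCommGroup G] [Fintype G]
    [CommRing R] (g c : G → R) (hc : ∀ x y, c (x + y) + c (x - y) = 2 * c x * c y) (k : G) :
    ∑ x, (g (x - k) + g (x + k)) * c x = 2 * c k * ∑ x, g x * c x := by
  have hsub : ∑ x, g (x - k) * c x = ∑ x, g x * c (x + k) :=
    Fintype.sum_equiv (Equiv.subRight k) _ _ fun x => by simp
  have hadd : ∑ x, g (x + k) * c x = ∑ x, g x * c (x - k) :=
    Fintype.sum_equiv (Equiv.addRight k) _ _ fun x => by simp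
  rw [mul_sum, Finset.sum_congr rfl fun x _ => add_mul _ _ _, sum_add_distrib, hsub, hadd,
    ← sum_add_distrib]
  refine Finset.sum_congr rfl fun x _ => ?_
  rw [← mul_add, hc]
  ring

theorem Matrix.isDiag_transpose_mul_mul_of_mul_eq_mul_diagonal {n R : Type*} [Fintype n]
    [DecidableEq n] [CommRing R] {W K B : Matrix n n R} (hW : Wᵀ = W) (hK : Kᵀ = K)
    (hKWK : (K * W * K).IsDiag) {d : n → R} (hB : B * W * K = K * diagonal d) :
    ((W * K)ᵀ * B * (W * K)).IsDiag := by
  rw [transpose_mul, hW, hK, Matrix.mul_assoc, ← Matrix.mul_assoc B, hB, ← Matrix.mul_assoc,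
    ← hKWK.diagonal_diag, diagonal_mul_diagonal]
  exact isDiag_diagonal _

namespace ZMod

theorem sum_eq_sum_range {M : Type*} [AddCommMonoid M] (N : ℕ) [NeZero N] (f : ZMod N → M) :
    ∑ x, f x = ∑ i ∈ range N, f i :=
  (sum_nbij' (fun i : ℕ => (i : ZMod N)) val (by simp) (by simp [val_lt])
    (fun i hi => val_cast_of_lt (mem_range.1 hi)) (by simp) (by simp)).symm

theorem natAbs_valMinAbs_intCast {n : ℕ} (q : ℤ) (hq : q.natAbs ≤ n / 2) :
    (q : ZMod n).valMinAbs.natAbs = q.natAbs := by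
  obtain ⟨k, rfl | rfl⟩ := Int.eq_nat_or_neg q
  all_goals
    simp only [Int.natAbs_neg, Int.natAbs_natCast] at hq ⊢
    simp [natAbs_valMinAbs_neg, valMinAbs_natCast_of_le_half hq]

theorem intCast_ne_zero_of_natAbs_lt {n : ℕ} {q : ℤ} (hq : q ≠ 0) (hlt : q.natAbs < n) :
    (q : ZMod n) ≠ 0 := by
  rw [Ne, intCast_zmod_eq_zero_iff_dvd, ← Int.natAbs_dvd_natAbs, Int.natAbs_natCast]
  exact fun h => Int.natAbs_ne_zero.2 hq (Nat.eq_zero_of_dvd_of_lt h hlt)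

variable {N : ℕ} [NeZero N]

noncomputable def cos (x : ZMod N) : ℝ := (toCircle x : ℂ).re

theorem cos_neg (x : ZMod N) : cos (-x) = cos x := by
  simp [cos, AddChar.map_neg_eq_inv]

theorem cos_add_add_cos_sub (x y : ZMod N) :
    cos (x + y) + cos (x - y) = 2 * cos x * cos y := by
  rw [cos, cos, cos, cos, sub_eq_add_neg, AddChar.map_add_eq_mul, AddChar.map_add_eq_mul,
    AddChar.map_neg_eq_inv, Circle.coe_mul, Circle.coe_mul, Circle.coe_inv_eq_conj,
    ← Complex.add_re, ← mul_add, Complex.add_conj, mul_comm, Complex.re_ofReal_mul]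
  ring

theorem sum_cos_mul_eq_zero {r : ZMod N} (hr : r ≠ 0) : ∑ x, cos (r * x) = 0 := by
  have h := AddChar.sum_eq_zero_iff_ne_zero.2 ((isPrimitive_stdAddChar N) hr)
  simpa [cos, ← Complex.re_sum, AddChar.mulShift_apply, stdAddChar_apply] using
    congrArg Complex.re h

theorem cos_natCast (j : ℕ) : cos (j : ZMod N) = Real.cos (2 * π * j / N) := by
  rw [cos, toCircle_natCast, ← Complex.exp_ofReal_mul_I_re]
  congr 2
  push_cast
  ring

end ZMod

def dctWeight (m i : ℕ) : ℝ := if i = 0 ∨ i = m then 1 else 2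

theorem sum_dctWeight_mul_eq_sum_zmod {m : ℕ} [NeZero m] (f : ZMod (2 * m) → ℝ)
    (hf : ∀ x, f (-x) = f x) :
    ∑ k : Fin (m + 1), dctWeight m k * f k = ∑ x, f x := by
  have hweight : ∑ k : Fin (m + 1), dctWeight m k * f k
      = 2 * ∑ i ∈ range (m + 1), f i - f 0 - f m := by
    rw [Fin.sum_univ_eq_sum_range (fun i => dctWeight m i * f i), mul_sum]
    have hpoint : ∀ i ∈ range (m + 1), dctWeight m i * f i
        = 2 * f i - (if i = 0 then f 0 else 0) - (if i = m then f m else 0) := by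
      intro i _
      unfold dctWeight
      split_ifs <;> simp_all <;> ring
    rw [sum_congr rfl hpoint, sum_sub_distrib, sum_sub_distrib, sum_ite_eq', sum_ite_eq']
    simp
  have hreflect : ∑ i ∈ range (m + 1), f i = ∑ i ∈ range (m + 1), f ((m + i : ℕ)) := by
    rw [← sum_range_reflect]
    refine sum_congr rfl fun i hi => ?_
    rw [← hf]
    congr 1
    have : (m + 1 - 1 - i) + (m + i) = 2 * m := by have := mem_range.1 hi; omega
    rw [neg_eq_iff_add_eq_zero, ← Nat.cast_add, this, ZMod.natCast_self]
  have hsplit : ∑ x, f x = ∑ i ∈ range m, f i + ∑ i ∈ range m, f ((m + i : ℕ)) := by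
    rw [ZMod.sum_eq_sum_range, ← sum_range_add, ← two_mul]
  rw [hweight, hsplit, two_mul]
  nth_rewrite 2 [hreflect]
  rw [sum_range_succ, sum_range_succ, ← two_mul, ZMod.natCast_self]
  ring

noncomputable def evenPeriodicExt (m : ℕ) (a : ℕ → ℝ) (x : ZMod (2 * m)) : ℝ :=
  a x.valMinAbs.natAbs

theorem evenPeriodicExt_neg (m : ℕ) (a : ℕ → ℝ) (x : ZMod (2 * m)) :
    evenPeriodicExt m a (-x) = evenPeriodicExt m a x := by
  rw [evenPeriodicExt, ZMod.natAbs_valMinAbs_neg, evenPeriodicExt]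

theorem evenPeriodicExt_intCast {m : ℕ} (a : ℕ → ℝ) (q : ℤ) (hq : q.natAbs ≤ m) :
    evenPeriodicExt m a q = a q.natAbs := by
  rw [evenPeriodicExt, ZMod.natAbs_valMinAbs_intCast q (by omega)]

theorem evenPeriodicExt_natCast_sub {m : ℕ} (a : ℕ → ℝ) {k p : ℕ} (hk : k ≤ m) (hp : p ≤ m) :
    evenPeriodicExt m a ((p : ZMod (2 * m)) - k) = a ((k : ℤ) - p).natAbs := by
  have h := evenPeriodicExt_intCast (m := m) a ((p : ℤ) - k) (by omega)
  push_cast at h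
  rw [h]
  congr 1
  omega

theorem evenPeriodicExt_natCast_add {m : ℕ} (a : ℕ → ℝ) {k p : ℕ} (hk : k ≤ m) (hp : p ≤ m) :
    evenPeriodicExt m a ((p : ZMod (2 * m)) + k) = a (m - ((m : ℤ) - k - p).natAbs) := by
  rcases le_or_gt (p + k) m with hle | hgt
  · have h := evenPeriodicExt_intCast (m := m) a ((p : ℤ) + k) (by omega)
    push_cast at h
    rw [h]
    congr 1
    omega
  · have h := evenPeriodicExt_intCast (m := m) a ((p : ℤ) + k - (2 * m : ℕ)) (by omega)
    rw [Int.cast_sub, Int.cast_natCast, ZMod.natCast_self, sub_zero] at h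
    push_cast at h
    rw [h]
    congr 1
    omega

noncomputable def dctCos (m : ℕ) : Matrix (Fin (m + 1)) (Fin (m + 1)) ℝ :=
  of fun k l => Real.cos (π * k * l / m)

theorem dctCos_apply_eq_zmod_cos (m : ℕ) [NeZero m] (k l : Fin (m + 1)) :
    dctCos m k l = ZMod.cos (((k : ℕ) : ZMod (2 * m)) * ((l : ℕ) : ZMod (2 * m))) := by
  rw [← Nat.cast_mul, ZMod.cos_natCast, dctCos, of_apply]
  have hm : (m : ℝ) ≠ 0 := Nat.cast_ne_zero.2 (NeZero.ne m)
  congr 1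
  push_cast
  field_simp

theorem dctCos_transpose (m : ℕ) : (dctCos m)ᵀ = dctCos m := by
  ext k l
  simp only [dctCos, transpose_apply, of_apply]
  ring_nf

noncomputable def toeplitzPlusHankel (m : ℕ) (a : ℕ → ℝ) :
    Matrix (Fin (m + 1)) (Fin (m + 1)) ℝ :=
  of fun k p => evenPeriodicExt m a ((p : ℕ) - (k : ℕ)) + evenPeriodicExt m a ((p : ℕ) + (k : ℕ))

theorem add_flip_mul_eq_toeplitzPlusHankel {m : ℕ} (a : ℕ → ℝ)
    {T T' J : Matrix (Fin (m + 1)) (Fin (m + 1)) ℝ}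
    (hT : ∀ k l : Fin (m + 1), T k l = a (((k : ℕ) : ℤ) - ((l : ℕ) : ℤ)).natAbs)
    (hJ : ∀ k l : Fin (m + 1), J k l = if (k : ℕ) + (l : ℕ) = m then 1 else 0)
    (hT' : ∀ k l : Fin (m + 1), T' k l = a (m - (((k : ℕ) : ℤ) - ((l : ℕ) : ℤ)).natAbs)) :
    T + J * T' = toeplitzPlusHankel m a := by
  ext k p
  have hk := Nat.lt_succ_iff.1 k.2
  have hp := Nat.lt_succ_iff.1 p.2
  have hflip : (J * T') k p = T' k.rev p := by
    rw [mul_apply, Finset.sum_eq_single k.rev]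
    · rw [hJ, if_pos (by rw [Fin.val_rev]; omega), one_mul]
    · intro q _ hq
      rw [hJ, if_neg, zero_mul]
      exact fun h => hq (Fin.ext (by rw [Fin.val_rev]; omega))
    · simp
  rw [Matrix.add_apply, hflip, hT, hT', toeplitzPlusHankel, of_apply,
    evenPeriodicExt_natCast_sub a hk hp, evenPeriodicExt_natCast_add a hk hp, Fin.val_rev]
  congr 3
  omega

theorem toeplitzPlusHankel_mul_diagonal_dctWeight_mul_dctCos (m : ℕ) [NeZero m] (a : ℕ → ℝ) :
    toeplitzPlusHankel m a * diagonal (fun k : Fin (m + 1) => dctWeight m k) * dctCos m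
      = dctCos m * diagonal fun l : Fin (m + 1) =>
          2 * ∑ x, evenPeriodicExt m a x * ZMod.cos (x * ((l : ℕ) : ZMod (2 * m))) := by
  ext k l
  set c : ZMod (2 * m) → ℝ := fun x => ZMod.cos (x * ((l : ℕ) : ZMod (2 * m)))
  set k' : ZMod (2 * m) := ((k : ℕ) : ZMod (2 * m))
  set f : ZMod (2 * m) → ℝ :=
    fun x => (evenPeriodicExt m a (x - k') + evenPeriodicExt m a (x + k')) * c x
  have hc : ∀ x y, c (x + y) + c (x - y) = 2 * c x * c y := fun x y => by
    simp only [c, add_mul, sub_mul, ZMod.cos_add_add_cos_sub]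
  have hf : ∀ x, f (-x) = f x := fun x => by
    simp only [f, c, show -x - k' = -(x + k') by ring, show -x + k' = -(x - k') by ring,
      evenPeriodicExt_neg, neg_mul, ZMod.cos_neg, add_comm]
  calc (toeplitzPlusHankel m a * diagonal (fun k : Fin (m + 1) => dctWeight m k) * dctCos m) k l
      = ∑ p : Fin (m + 1), dctWeight m p * f p := by
        rw [mul_apply]
        simp only [mul_diagonal, toeplitzPlusHankel, of_apply, dctCos_apply_eq_zmod_cos]
        exact Finset.sum_congr rfl fun p _ => by ring
    _ = 2 * c k' * ∑ x, evenPeriodicExt m a x * c x := by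
        rw [sum_dctWeight_mul_eq_sum_zmod f hf,
          Fintype.sum_sub_add_add_mul_eq_of_dAlembert _ _ hc]
    _ = _ := by
        rw [mul_diagonal, dctCos_apply_eq_zmod_cos]
        ring

theorem isDiag_dctCos_mul_diagonal_dctWeight_mul_dctCos (m : ℕ) [NeZero m] :
    (dctCos m * diagonal (fun k : Fin (m + 1) => dctWeight m k) * dctCos m).IsDiag := by
  intro j l hjl
  have hj := Nat.lt_succ_iff.1 j.2
  have hl := Nat.lt_succ_iff.1 l.2
  have hne := Fin.val_ne_of_ne hjl
  have hadd : ((j : ℕ) : ZMod (2 * m)) + (l : ℕ) ≠ 0 := by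
    exact_mod_cast ZMod.intCast_ne_zero_of_natAbs_lt (n := 2 * m) (q := j + l) (by omega)
      (by omega)
  have hsub : ((j : ℕ) : ZMod (2 * m)) - (l : ℕ) ≠ 0 := by
    exact_mod_cast ZMod.intCast_ne_zero_of_natAbs_lt (n := 2 * m) (q := j - l) (by omega)
      (by omega)
  set j' : ZMod (2 * m) := ((j : ℕ) : ZMod (2 * m))
  set l' : ZMod (2 * m) := ((l : ℕ) : ZMod (2 * m))
  set f : ZMod (2 * m) → ℝ := fun x => ZMod.cos (j' * x) * ZMod.cos (l' * x)
  have hf : ∀ x, f (-x) = f x := fun x => by simp only [f, mul_neg, ZMod.cos_neg]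
  calc (dctCos m * diagonal (fun k : Fin (m + 1) => dctWeight m k) * dctCos m) j l
      = ∑ k : Fin (m + 1), dctWeight m k * f k := by
        rw [mul_apply]
        simp only [mul_diagonal, dctCos_apply_eq_zmod_cos]
        exact Finset.sum_congr rfl fun k _ => by rw [mul_comm _ l']; ring
    _ = (∑ x, ZMod.cos ((j' + l') * x) + ∑ x, ZMod.cos ((j' - l') * x)) / 2 := by
        rw [sum_dctWeight_mul_eq_sum_zmod f hf, ← sum_add_distrib, sum_div]
        refine Finset.sum_congr rfl fun x _ => ?_
        rw [add_mul, sub_mul, ZMod.cos_add_add_cos_sub]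
        ring
    _ = 0 := by rw [ZMod.sum_cos_mul_eq_zero hadd, ZMod.sum_cos_mul_eq_zero hsub]; simp

/-- The DCT-I diagonalizes Toeplitz-plus-Hankel matrices of the form
`B = toep(a) + J·toep(Ja)`: for any `a ∈ ℝⁿ`, `C_nᵀ B C_n` is diagonal. -/
theorem dct1_diagonalizes_toeplitz_hankel (n : ℕ) (hn : 2 ≤ n) (a : ℕ → ℝ)
    (C T T' J : Matrix (Fin n) (Fin n) ℝ)
    (hC : ∀ k l : Fin n, C k l =
      (if (k : ℕ) = 0 ∨ (k : ℕ) = n - 1 then 1 else 2) / Real.sqrt (2 * n - 2) *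
        Real.cos (Real.pi * k * l / (n - 1)))
    (hT : ∀ k l : Fin n, T k l = a (((k : ℕ) : ℤ) - ((l : ℕ) : ℤ)).natAbs)
    (hJ : ∀ k l : Fin n, J k l = if (k : ℕ) + (l : ℕ) = n - 1 then 1 else 0)
    (hT' : ∀ k l : Fin n, T' k l = a (n - 1 - (((k : ℕ) : ℤ) - ((l : ℕ) : ℤ)).natAbs)) :
    ∃ d : Fin n → ℝ, Cᵀ * (T + J * T') * C = Matrix.diagonal d := by
  obtain ⟨m, rfl⟩ : ∃ m, n = m + 1 := ⟨n - 1, by omega⟩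
  have : NeZero m := ⟨by omega⟩
  set W := diagonal fun k : Fin (m + 1) => dctWeight m k
  have hC' : C = (√(2 * m))⁻¹ • (W * dctCos m) := by
    ext k l
    rw [hC, Matrix.smul_apply, diagonal_mul, dctCos, of_apply, dctWeight]
    push_cast
    ring_nf
  simp only [Nat.add_sub_cancel] at hJ hT'
  have hdiag := (isDiag_transpose_mul_mul_of_mul_eq_mul_diagonal (diagonal_transpose _)
    (dctCos_transpose m) (isDiag_dctCos_mul_diagonal_dctWeight_mul_dctCos m)
    (toeplitzPlusHankel_mul_diagonal_dctWeight_mul_dctCos m a)).smul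
    ((√(2 * m))⁻¹ * (√(2 * m))⁻¹)
  rw [add_flip_mul_eq_toeplitzPlusHankel a hT hJ hT', hC', transpose_smul]
  simp only [Matrix.smul_mul, Matrix.mul_smul, smul_smul]
  exact ⟨_, hdiag.diagonal_diag.symm⟩
end

section
/- Two-dimensional normal equations structure: for the 2-D least squares problem with basis functions cos(πkx)cos(πly) (0 ≤ k ≤ M_x, 0 ≤ l ≤ M_y, with constant term scaled by 1/√2), the matrix A = V^T V is a scaled block Toeplitz+Hankel matrix A = D(T+H)D, where the (l,l')-th block of T is A^{(|l−l'|)}, the (l,l')-th block of H is A^{(l+l')}, and each block A^{(m)} is itself the sum of a symmetric Toeplitz and a Hankel matrix with entries built from sums Σ_j w_j cos(πp x_j) cos(πq y_j). -/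
open Real Matrix

lemma cos_natAbs' (k k' : ℕ) (X : ℝ) :
    Real.cos (Real.pi * ((((k:ℤ) - (k':ℤ)).natAbs : ℕ) : ℝ) * X)
      = Real.cos (Real.pi * ((k:ℝ) - (k':ℝ)) * X) := by
  have h : ((((k:ℤ) - (k':ℤ)).natAbs : ℕ) : ℝ) = |(k:ℝ) - (k':ℝ)| := by
    push_cast [Nat.cast_natAbs]
    ring_nf
  rw [h]
  rcases abs_cases ((k:ℝ) - (k':ℝ)) with ⟨h1, _⟩ | ⟨h1, _⟩
  · rw [h1]
  · rw [h1, show Real.pi * -((k:ℝ) - (k':ℝ)) * X = -(Real.pi * ((k:ℝ)-(k':ℝ)) * X) by ring,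
      Real.cos_neg]

lemma cos_prod' (k k' : ℕ) (X : ℝ) :
    Real.cos (Real.pi * (k:ℝ) * X) * Real.cos (Real.pi * (k':ℝ) * X)
      = (Real.cos (Real.pi * (((k + k' : ℕ)):ℝ) * X)
        + Real.cos (Real.pi * ((((k:ℤ) - (k':ℤ)).natAbs : ℕ) : ℝ) * X)) / 2 := by
  rw [cos_natAbs']
  have e1 : Real.pi * (((k + k' : ℕ)):ℝ) * X = Real.pi * (k:ℝ) * X + Real.pi * (k':ℝ) * X := by
    push_cast; ring
  have e2 : Real.pi * ((k:ℝ) - (k':ℝ)) * X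
      = Real.pi * (k:ℝ) * X - Real.pi * (k':ℝ) * X := by ring
  rw [e1, e2, Real.cos_add, Real.cos_sub]; ring

/-- Two-dimensional normal equations structure: for the 2-D least squares problem with
basis `cos(πkx)cos(πly)` (constant term scaled by `1/√2`), the matrix `A = VᵀV` is a
scaled block Toeplitz+Hankel matrix `A = D(T+H)D`: the `(l,l')` block of `T` is
`A^{(|l−l'|)}`, that of `H` is `A^{(l+l')}`, where
`A^{(m)}_{k,k'} = a_{k+k',m} + a_{|k−k'|,m}` with
`a_{p,q} = (1/4) Σ_j w_j cos(πp x_j) cos(πq y_j)`. -/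
theorem normal_equations_block_toeplitz_hankel (r Mx My : ℕ)
    (x y w : Fin r → ℝ)
    (hx : ∀ j, x j ∈ Set.Icc (0:ℝ) 1) (hy : ∀ j, y j ∈ Set.Icc (0:ℝ) 1)
    (hw : ∀ j, 0 < w j)
    (V : Matrix (Fin r) (Fin (My + 1) × Fin (Mx + 1)) ℝ)
    (hV : ∀ (j : Fin r) (p : Fin (My + 1) × Fin (Mx + 1)),
      V j p = (if (p.1 : ℕ) = 0 ∧ (p.2 : ℕ) = 0 then 1 / Real.sqrt 2 else 1) *
        Real.sqrt (w j) * Real.cos (Real.pi * p.2 * x j) * Real.cos (Real.pi * p.1 * y j))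
    (a : ℕ → ℕ → ℝ)
    (ha : ∀ p q : ℕ, a p q = (1 / 4) *
      ∑ j, w j * Real.cos (Real.pi * p * x j) * Real.cos (Real.pi * q * y j))
    (Ablk : ℕ → Matrix (Fin (Mx + 1)) (Fin (Mx + 1)) ℝ)
    (hAblk : ∀ (m : ℕ) (k k' : Fin (Mx + 1)),
      Ablk m k k' = a ((k : ℕ) + (k' : ℕ)) m + a (((k : ℕ) : ℤ) - ((k' : ℕ) : ℤ)).natAbs m)
    (T H D : Matrix (Fin (My + 1) × Fin (Mx + 1)) (Fin (My + 1) × Fin (Mx + 1)) ℝ)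
    (hT : ∀ p q, T p q = Ablk (((p.1 : ℕ) : ℤ) - ((q.1 : ℕ) : ℤ)).natAbs p.2 q.2)
    (hH : ∀ p q, H p q = Ablk ((p.1 : ℕ) + (q.1 : ℕ)) p.2 q.2)
    (hD : D = Matrix.diagonal (fun p : Fin (My + 1) × Fin (Mx + 1) =>
      if (p.1 : ℕ) = 0 ∧ (p.2 : ℕ) = 0 then 1 / Real.sqrt 2 else 1)) :
    Vᵀ * V = D * (T + H) * D := by
  ext p q
  rw [hD, Matrix.mul_diagonal, Matrix.diagonal_mul, Matrix.add_apply, hT, hH,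
    hAblk, hAblk, ha, ha, ha, ha, Matrix.mul_apply]
  simp only [Matrix.transpose_apply, hV]
  simp only [mul_add, add_mul, Finset.mul_sum, Finset.sum_mul, ← Finset.sum_add_distrib]
  refine Finset.sum_congr rfl fun j _ => ?_
  have hww : Real.sqrt (w j) * Real.sqrt (w j) = w j := Real.mul_self_sqrt (hw j).le
  have h2 := cos_prod' (p.2 : ℕ) (q.2 : ℕ) (x j)
  have h1 := cos_prod' (p.1 : ℕ) (q.1 : ℕ) (y j)
  rw [show ∀ cp s Cx Cy cq Cx' Cy' : ℝ,
      (cp * s * Cx * Cy) * (cq * s * Cx' * Cy')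
        = cp * cq * (s * s) * ((Cx * Cx') * (Cy * Cy'))
      from fun _ _ _ _ _ _ _ => by ring]
  rw [hww, h2, h1]
  ring
end

section
/- For equally spaced sampling points x_j = (j−1)/(r−1), j = 1, ..., r, with weights w_j = (x_{j+1}−x_{j−1})/2 (using x_0 = −x_1, x_{r+1} = 2−x_r) and polynomial degree M < r−1, the matrix A = V^T V equals (1/2)I_{M+1}, i.e., the scaled cosine basis functions are exactly orthonormal (up to factor 1/2) with respect to this quadrature rule. -/
/-!
The weights are those of the trapezoidal rule on the grid `j / n`, `n = r - 1`, scaled by `1 / n`.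
By the product-to-sum formula, every entry of `VᵀV` is a combination of trapezoidal sums
`∑ t_j cos (π m j / n)` with `m = k ± l`. Telescoping
`sin (θ/2) (cos (jθ) + cos ((j + 1) θ)) = cos (θ/2) (sin ((j + 1) θ) - sin (jθ))`
evaluates such a sum at `θ = π m / n` to `sin (π m) cos (θ/2) / (2 sin (θ/2)) = 0` as long as
`2n ∤ m`; since `k, l ≤ M < n`, only `m = 0` survives: once if `k = l ≠ 0`, twice if
`k = l = 0`, which the factor `1/√2` in the zeroth column compensates.
-/

open Real Matrix Finset

noncomputable def trapezoidWeight (n j : ℕ) : ℝ := if j = 0 ∨ j = n then 1 / 2 else 1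

lemma trapezoidWeight_nonneg (n j : ℕ) : 0 ≤ trapezoidWeight n j := by
  unfold trapezoidWeight
  split_ifs <;> norm_num

lemma sum_trapezoidWeight_mul {n : ℕ} (hn : n ≠ 0) (f : ℕ → ℝ) :
    ∑ j ∈ range (n + 1), trapezoidWeight n j * f j =
      ∑ j ∈ range n, (f j + f (j + 1)) / 2 := by
  have hweight : ∀ j, trapezoidWeight n j * f j =
      f j - (if j = 0 then f 0 / 2 else 0) - (if j = n then f n / 2 else 0) := by
    intro j
    unfold trapezoidWeight
    split_ifs <;> subst_vars <;> first | omega | ring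
  have hshift := (sum_range_succ' f n).symm.trans (sum_range_succ f n)
  simp only [hweight, sum_sub_distrib, sum_ite_eq', mem_range, ← sum_div, sum_add_distrib,
    sum_range_succ, n.lt_succ_self, n.succ_pos, if_true]
  linarith

lemma sin_half_mul_sum_cos_add_cos (θ : ℝ) (n : ℕ) :
    sin (θ / 2) * ∑ j ∈ range n, (cos (j * θ) + cos ((j + 1) * θ)) =
      cos (θ / 2) * sin (n * θ) := by
  induction n with
  | zero => simp
  | succ n ih =>
    rw [sum_range_succ, mul_add, ih]
    push_cast
    set a := θ / 2
    set u := n * θ + a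
    rw [show (n : ℝ) * θ = u - a by simp only [u]; ring,
      show ((n : ℝ) + 1) * θ = u + a by simp only [u, a]; ring]
    simp only [cos_add, cos_sub, sin_add, sin_sub]
    ring

lemma sum_trapezoidWeight_mul_cos_eq_zero {n : ℕ} (hn : n ≠ 0) {m : ℤ}
    (hm : ¬ (2 * n : ℤ) ∣ m) :
    ∑ j ∈ range (n + 1), trapezoidWeight n j * cos (π * m * (j / n)) = 0 := by
  have hn' : (n : ℝ) ≠ 0 := by exact_mod_cast hn
  have hsin : sin (π * m / n / 2) ≠ 0 := by
    rw [Ne, sin_eq_zero_iff]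
    rintro ⟨k, hk⟩
    refine hm ⟨k, ?_⟩
    have : (m : ℝ) = 2 * n * k := by
      field_simp at hk
      nlinarith [pi_pos]
    exact_mod_cast this
  have hsum := sin_half_mul_sum_cos_add_cos (π * m / n) n
  rw [show (n : ℝ) * (π * m / n) = m * π by field_simp, sin_int_mul_pi, mul_zero] at hsum
  rw [sum_trapezoidWeight_mul hn, ← sum_div, div_eq_zero_iff]
  left
  convert (mul_eq_zero.mp hsum).resolve_left hsin using 2 with j
  push_cast
  ring_nf

lemma sum_trapezoidWeight_mul_cos {n : ℕ} (hn : n ≠ 0) {m : ℤ} (hm : |m| < 2 * n) :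
    ∑ j ∈ range (n + 1), trapezoidWeight n j * cos (π * m * (j / n)) =
      if m = 0 then (n : ℝ) else 0 := by
  split_ifs with h0
  · simpa [h0] using sum_trapezoidWeight_mul hn 1
  · exact sum_trapezoidWeight_mul_cos_eq_zero hn fun hdvd => h0 (Int.eq_zero_of_abs_lt_dvd hdvd hm)

noncomputable def cosineScale (k : ℕ) : ℝ := if k = 0 then (√2)⁻¹ else 1

lemma cosineScale_zero_mul_self : cosineScale 0 * cosineScale 0 = 1 / 2 := by
  simp only [cosineScale, if_true, ← mul_inv, Real.mul_self_sqrt zero_le_two, one_div]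

noncomputable def cosineBasis (n k j : ℕ) : ℝ := cosineScale k * cos (π * k * (j / n))

lemma cosineBasis_mul_cosineBasis (n k l j : ℕ) :
    cosineBasis n k j * cosineBasis n l j = cosineScale k * cosineScale l / 2 *
      (cos (π * ((k - l : ℤ) : ℝ) * (j / n)) +
        cos (π * ((k + l : ℤ) : ℝ) * (j / n))) := by
  simp only [cosineBasis]
  push_cast
  rw [show π * (k - l) * (j / n) = π * k * (j / n) - π * l * (j / n) by ring,
    show π * (k + l) * (j / n) = π * k * (j / n) + π * l * (j / n) by ring, cos_sub, cos_add]
  ring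

lemma sum_trapezoidWeight_mul_cosineBasis_mul {n k l : ℕ} (hk : k < n) (hl : l < n) :
    ∑ j ∈ range (n + 1), trapezoidWeight n j * (cosineBasis n k j * cosineBasis n l j) =
      if k = l then (n : ℝ) / 2 else 0 := by
  simp only [cosineBasis_mul_cosineBasis, mul_left_comm (trapezoidWeight n _), ← mul_sum, mul_add,
    sum_add_distrib]
  rw [sum_trapezoidWeight_mul_cos (by omega) (by rw [abs_lt]; omega),
    sum_trapezoidWeight_mul_cos (by omega) (by rw [abs_lt]; omega)]
  by_cases hkl : k = l
  · subst hkl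
    by_cases hk0 : k = 0
    · simp only [hk0, cosineScale_zero_mul_self]
      norm_num
      ring
    · simp [cosineScale, hk0]
      ring
  · rw [if_neg (by omega), if_neg (by omega), if_neg hkl]
    ring

theorem equally_spaced_half_identity_general (r M : ℕ) (hM : M < r - 1)
    (w : Fin r → ℝ)
    (hw : ∀ j : Fin r, w j = if (j : ℕ) = 0 ∨ (j : ℕ) = r - 1
      then 1 / (2 * ((r : ℝ) - 1)) else 1 / ((r : ℝ) - 1))
    (V : Matrix (Fin r) (Fin (M + 1)) ℝ)
    (hV : ∀ (j : Fin r) (k : Fin (M + 1)),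
      V j k = if (k : ℕ) = 0 then Real.sqrt (w j) / Real.sqrt 2
        else Real.sqrt (w j) * Real.cos (Real.pi * k * ((j : ℕ) / ((r : ℝ) - 1)))) :
    Vᵀ * V = (1 / 2 : ℝ) • 1 := by
  obtain ⟨n, rfl⟩ : ∃ n, r = n + 1 := ⟨r - 1, by omega⟩
  have hn : ((n + 1 : ℕ) : ℝ) - 1 = n := by push_cast; ring
  have hn0 : (n : ℝ) ≠ 0 := Nat.cast_ne_zero.2 (by omega)
  have hw' (j : Fin (n + 1)) : w j = trapezoidWeight n j / n := by
    rw [hw, hn, Nat.add_sub_cancel, trapezoidWeight]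
    split_ifs <;> ring
  have hV' (j : Fin (n + 1)) (k : Fin (M + 1)) : V j k = √(w j) * cosineBasis n k j := by
    rw [hV, hn, cosineBasis, cosineScale]
    split_ifs with hk
    · simp [hk, div_eq_mul_inv]
    · rw [one_mul]
  have hentry (k l : Fin (M + 1)) (j : Fin (n + 1)) : V j k * V j l =
      trapezoidWeight n j * (cosineBasis n k j * cosineBasis n l j) / n := by
    have hw_nonneg : 0 ≤ w j := hw' j ▸ div_nonneg (trapezoidWeight_nonneg n j) n.cast_nonneg
    rw [hV', hV', mul_mul_mul_comm, Real.mul_self_sqrt hw_nonneg, hw', div_mul_eq_mul_div]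
  ext k l
  rw [mul_apply]
  simp only [transpose_apply, hentry]
  rw [Fin.sum_univ_eq_sum_range
      (fun j => trapezoidWeight n j * (cosineBasis n k j * cosineBasis n l j) / n),
    ← sum_div, sum_trapezoidWeight_mul_cosineBasis_mul (by omega) (by omega)]
  simp only [Matrix.smul_apply, one_apply, Fin.ext_iff, smul_eq_mul]
  split_ifs
  · field_simp
  · simp

/-- For equally spaced sampling points `x_j = (j−1)/(r−1)`, `j = 1, …, r`, with weights
`w_j = (x_{j+1} − x_{j−1})/2` (so `w_1 = w_r = 1/(2(r−1))`, `w_j = 1/(r−1)` otherwise)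
and degree `M < r − 1`, the matrix `A = VᵀV` equals `(1/2)·I`. -/
theorem equally_spaced_half_identity (r M : ℕ) (hr : 2 ≤ r) (hM : M < r - 1)
    (w : Fin r → ℝ)
    (hw : ∀ j : Fin r, w j = if (j : ℕ) = 0 ∨ (j : ℕ) = r - 1
      then 1 / (2 * ((r : ℝ) - 1)) else 1 / ((r : ℝ) - 1))
    (V : Matrix (Fin r) (Fin (M + 1)) ℝ)
    (hV : ∀ (j : Fin r) (k : Fin (M + 1)),
      V j k = if (k : ℕ) = 0 then Real.sqrt (w j) / Real.sqrt 2
        else Real.sqrt (w j) * Real.cos (Real.pi * k * ((j : ℕ) / ((r : ℝ) - 1)))) :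
    Vᵀ * V = (1 / 2 : ℝ) • 1 :=
  equally_spaced_half_identity_general r M hM w hw V hV
end
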